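/- arXiv:2409.19244 — 6 statements merged into one kernel-verified Lean document; each statement's English description precedes it below -/
import Mathlib

section
/- Suppose (x_n) is a sequence of nonzero reals satisfying x_{n+10} = x_n / (A + B·x_n·x_{n+2}·x_{n+4}·x_{n+6}·x_{n+8}) with all denominators nonzero. Define F_n = 1/(x_n·x_{n+2}·x_{n+4}·x_{n+6}·x_{n+8}). Then F_{n+2} = A·F_n + B for all n. -/
/-! With `P n = x n * x (n+2) * ... * x (n+8)`, the recurrence says exactly that the window shifts as
`P (n+2) = P n / (A + B * P n)`; taking reciprocals turns this Möbius step into the affine map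
`1 / P ↦ A / P + B`. -/

def windowProd {M : Type*} [CommMonoid M] (x : ℕ → M) (n : ℕ) : M :=
  x n * x (n + 2) * x (n + 4) * x (n + 6) * x (n + 8)

lemma windowProd_ne_zero {K : Type*} [Field K] {x : ℕ → K} (hx : ∀ n, x n ≠ 0) (n : ℕ) :
    windowProd x n ≠ 0 := by
  unfold windowProd
  have := hx n; have := hx (n + 2); have := hx (n + 4); have := hx (n + 6); have := hx (n + 8)
  positivity

lemma windowProd_add_two {K : Type*} [Field K] {x : ℕ → K} (hx : ∀ n, x n ≠ 0) (n : ℕ) :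
    windowProd x (n + 2) = windowProd x n / x n * x (n + 10) := by
  unfold windowProd
  field_simp [hx n]

lemma one_div_div_affine {K : Type*} [Field K] {p : K} (hp : p ≠ 0) (a b : K) :
    1 / (p / (a + b * p)) = a * (1 / p) + b := by
  rw [one_div_div]
  field_simp

theorem stmt2_general (A B : ℝ) (x : ℕ → ℝ)
    (hx : ∀ n, x n ≠ 0)
    (hrec : ∀ n, x (n + 10) =
      x n / (A + B * (x n * x (n+2) * x (n+4) * x (n+6) * x (n+8))))
    (F : ℕ → ℝ)
    (hF : ∀ n, F n = 1 / (x n * x (n+2) * x (n+4) * x (n+6) * x (n+8))) :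
    ∀ n, F (n + 2) = A * F n + B := by
  intro n
  have hP := windowProd_ne_zero hx n
  have hshift : windowProd x (n + 2) = windowProd x n / (A + B * windowProd x n) := by
    rw [windowProd_add_two hx, hrec n, ← windowProd]
    field_simp [hx n]
  have hF' : ∀ m, F m = 1 / windowProd x m := hF
  rw [hF', hF', hshift, one_div_div_affine hP]

theorem stmt2 (A B : ℝ) (x : ℕ → ℝ)
    (hx : ∀ n, x n ≠ 0)
    (hden : ∀ n, A + B * (x n * x (n+2) * x (n+4) * x (n+6) * x (n+8)) ≠ 0)
    (hrec : ∀ n, x (n + 10) =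
      x n / (A + B * (x n * x (n+2) * x (n+4) * x (n+6) * x (n+8))))
    (F : ℕ → ℝ)
    (hF : ∀ n, F n = 1 / (x n * x (n+2) * x (n+4) * x (n+6) * x (n+8))) :
    ∀ n, F (n + 2) = A * F n + B :=
  stmt2_general A B x hx hrec F hF
end

section
/- Let (x_n) satisfy x_{n+10} = x_n / (1 + B·x_n·x_{n+2}·x_{n+4}·x_{n+6}·x_{n+8}) with all terms nonzero and all denominators nonzero, where B ≠ 0. Then for each k ∈ {0,...,9} and n ≥ 0, x_{10n+k} = x_k · ∏_{s=0}^{n-1} (1 + B·(5s + ⌊k/2⌋)·P_{τ(k)}) / (1 + B·(5s + ⌊k/2⌋ + 1)·P_{τ(k)}), where τ(k) = k mod 2 and P_j = x_j·x_{j+2}·x_{j+4}·x_{j+6}·x_{j+8}. -/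
/-!
The products `P n = x n * x (n+2) * ... * x (n+8)` obey the Möbius recurrence
`P (n+2) = P n / (1 + B * P n)`, i.e. `1 / P` grows by `B` every two steps along each
parity class. Hence `P (j + 2m) = P j / (1 + B m P j)`, so the recurrence multiplies
`x (j + 2m)` by `(1 + B m P j) / (1 + B (m+1) P j)`, and these factors telescope.
-/

section

variable {K : Type*} [Field K]

theorem one_add_mul_div_one_add_mul {B P c : K} (h : 1 + B * c * P ≠ 0) :
    1 + B * (P / (1 + B * c * P)) = (1 + B * (c + 1) * P) / (1 + B * c * P) := by
  rw [eq_div_iff h, add_mul, mul_assoc B (P / _), div_mul_cancel₀ _ h]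
  ring

theorem one_add_mul_ne_zero_and_eq_div_of_succ_eq_div {q : ℕ → K} {B : K}
    (hden : ∀ n, 1 + B * q n ≠ 0) (hq : ∀ n, q (n + 1) = q n / (1 + B * q n)) (n : ℕ) :
    1 + B * n * q 0 ≠ 0 ∧ q n = q 0 / (1 + B * n * q 0) := by
  induction n with
  | zero => simp
  | succ n ih =>
    obtain ⟨hne, hqn⟩ := ih
    push_cast
    have hstep : 1 + B * q n = (1 + B * (n + 1) * q 0) / (1 + B * n * q 0) := by
      rw [hqn, one_add_mul_div_one_add_mul hne]
    have hne' : 1 + B * (n + 1) * q 0 ≠ 0 := by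
      simpa [hstep, hne] using hden n
    refine ⟨hne', ?_⟩
    rw [hq, hstep, hqn, div_div_div_cancel_right₀ hne]

def fiveProd (x : ℕ → K) (n : ℕ) : K :=
  x n * x (n + 2) * x (n + 4) * x (n + 6) * x (n + 8)

variable {B : K} {x : ℕ → K}

theorem fiveProd_add_two
    (hrec : ∀ n, x (n + 10) = x n / (1 + B * fiveProd x n)) (n : ℕ) :
    fiveProd x (n + 2) = fiveProd x n / (1 + B * fiveProd x n) := by
  change x (n + 2) * x (n + 4) * x (n + 6) * x (n + 8) * x (n + 10) = _
  rw [hrec, fiveProd]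
  ring

theorem fiveProd_add_two_mul (hden : ∀ n, 1 + B * fiveProd x n ≠ 0)
    (hrec : ∀ n, x (n + 10) = x n / (1 + B * fiveProd x n)) (j m : ℕ) :
    1 + B * m * fiveProd x j ≠ 0 ∧
      fiveProd x (j + 2 * m) = fiveProd x j / (1 + B * m * fiveProd x j) :=
  one_add_mul_ne_zero_and_eq_div_of_succ_eq_div (q := fun m => fiveProd x (j + 2 * m))
    (fun _ => hden _) (fun m => fiveProd_add_two hrec (j + 2 * m)) m

theorem add_two_mul_add_ten (hden : ∀ n, 1 + B * fiveProd x n ≠ 0)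
    (hrec : ∀ n, x (n + 10) = x n / (1 + B * fiveProd x n)) (j m : ℕ) :
    x (j + 2 * m + 10) = x (j + 2 * m) *
      ((1 + B * m * fiveProd x j) / (1 + B * (m + 1) * fiveProd x j)) := by
  obtain ⟨hne, hP⟩ := fiveProd_add_two_mul hden hrec j m
  rw [hrec, hP, one_add_mul_div_one_add_mul hne, div_div_eq_mul_div, mul_div_assoc]

end

theorem stmt4_general (B : ℝ) (x : ℕ → ℝ)
    (hden : ∀ n, 1 + B * (x n * x (n+2) * x (n+4) * x (n+6) * x (n+8)) ≠ 0)
    (hrec : ∀ n, x (n + 10) =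
      x n / (1 + B * (x n * x (n+2) * x (n+4) * x (n+6) * x (n+8)))) :
    ∀ k < 10, ∀ n : ℕ,
      x (10 * n + k) = x k * ∏ s ∈ Finset.range n,
        (1 + B * ((5 * s + k / 2 : ℕ) : ℝ) *
            (x (k % 2) * x (k % 2 + 2) * x (k % 2 + 4) * x (k % 2 + 6) * x (k % 2 + 8))) /
        (1 + B * (((5 * s + k / 2 : ℕ) : ℝ) + 1) *
            (x (k % 2) * x (k % 2 + 2) * x (k % 2 + 4) * x (k % 2 + 6) * x (k % 2 + 8))) := by
  intro k hk n
  induction n with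
  | zero => simp
  | succ n ih =>
    have hidx : 10 * n + k = k % 2 + 2 * (5 * n + k / 2) := by omega
    rw [show 10 * (n + 1) + k = 10 * n + k + 10 by ring, hidx,
      add_two_mul_add_ten hden hrec, ← hidx, ih, Finset.prod_range_succ, mul_assoc]
    rfl

theorem stmt4 (B : ℝ) (hB : B ≠ 0) (x : ℕ → ℝ)
    (hx : ∀ n, x n ≠ 0)
    (hden : ∀ n, 1 + B * (x n * x (n+2) * x (n+4) * x (n+6) * x (n+8)) ≠ 0)
    (hrec : ∀ n, x (n + 10) =
      x n / (1 + B * (x n * x (n+2) * x (n+4) * x (n+6) * x (n+8)))) :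
    ∀ k < 10, ∀ n : ℕ,
      x (10 * n + k) = x k * ∏ s ∈ Finset.range n,
        (1 + B * ((5 * s + k / 2 : ℕ) : ℝ) *
            (x (k % 2) * x (k % 2 + 2) * x (k % 2 + 4) * x (k % 2 + 6) * x (k % 2 + 8))) /
        (1 + B * (((5 * s + k / 2 : ℕ) : ℝ) + 1) *
            (x (k % 2) * x (k % 2 + 2) * x (k % 2 + 4) * x (k % 2 + 6) * x (k % 2 + 8))) :=
  stmt4_general B x hden hrec
end

section
/- Let (x_n) satisfy x_{n+10} = x_n / (A + B·x_n·x_{n+2}·x_{n+4}·x_{n+6}·x_{n+8}) with A ≠ 1, all terms nonzero and all denominators nonzero. Then for each k ∈ {0,...,9} and n ≥ 0, x_{10n+k} = x_k · ∏_{s=0}^{n-1} (A^{5s+⌊k/2⌋} + B·(1−A^{5s+⌊k/2⌋})/(1−A)·P_{τ(k)}) / (A^{5s+1+⌊k/2⌋} + B·(1−A^{5s+1+⌊k/2⌋})/(1−A)·P_{τ(k)}), where P_j = x_j·x_{j+2}·x_{j+4}·x_{j+6}·x_{j+8} and τ(k) = k mod 2. -/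
/-!
Write `P n = x n * x (n+2) * x (n+4) * x (n+6) * x (n+8)`. The recurrence gives
`P (n+2) = P n / (A + B * P n)`, so along each parity class `P` follows the orbit of the Möbius
map `p ↦ p / (A + B p)`, whose `m`-th iterate is `p ↦ p / D m` with
`D m = A^m + B (1 - A^m) / (1 - A) * p` (a linear recurrence `D (m+1) = A D m + B p`).
Hence `A + B * P (2m+t) = D (m+1) / D m`, and each step `x n ↦ x (n+10)` multiplies by
`D m / D (m+1)`; ten steps of the index are five steps of `m`.
-/

open Finset

section Mobius

variable {A B : ℝ}

noncomputable def mobiusIterDenom (A B p : ℝ) (m : ℕ) : ℝ :=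
  A ^ m + B * (1 - A ^ m) / (1 - A) * p

@[simp]
lemma mobiusIterDenom_zero (p : ℝ) : mobiusIterDenom A B p 0 = 1 := by
  simp [mobiusIterDenom]

lemma mobiusIterDenom_succ (hA : A ≠ 1) (p : ℝ) (m : ℕ) :
    mobiusIterDenom A B p (m + 1) = A * mobiusIterDenom A B p m + B * p := by
  have : (1 : ℝ) - A ≠ 0 := sub_ne_zero.mpr hA.symm
  unfold mobiusIterDenom
  field_simp
  ring

lemma mul_mobiusIterDenom_of_rec (hA : A ≠ 1) {p : ℕ → ℝ}
    (hp : ∀ m, p (m + 1) * (A + B * p m) = p m) (m : ℕ) :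
    p m * mobiusIterDenom A B (p 0) m = p 0 := by
  induction m with
  | zero => simp
  | succ m ih =>
    calc p (m + 1) * mobiusIterDenom A B (p 0) (m + 1)
        = p (m + 1) * (A * mobiusIterDenom A B (p 0) m + B * p 0) := by
          rw [mobiusIterDenom_succ hA]
      _ = p (m + 1) * (A + B * p m) * mobiusIterDenom A B (p 0) m := by
          linear_combination (-(p (m + 1) * B)) * ih
      _ = p 0 := by rw [hp, ih]

end Mobius

section Recurrence

variable {A B : ℝ} {x : ℕ → ℝ}

def stride2Prod (x : ℕ → ℝ) (n : ℕ) : ℝ :=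
  x n * x (n + 2) * x (n + 4) * x (n + 6) * x (n + 8)

lemma stride2Prod_ne_zero (hx : ∀ n, x n ≠ 0) (n : ℕ) : stride2Prod x n ≠ 0 := by
  simp [stride2Prod, hx]

lemma stride2Prod_add_two (hden : ∀ n, A + B * stride2Prod x n ≠ 0)
    (hrec : ∀ n, x (n + 10) = x n / (A + B * stride2Prod x n)) (n : ℕ) :
    stride2Prod x (n + 2) * (A + B * stride2Prod x n) = stride2Prod x n := by
  have hstep : stride2Prod x (n + 2) =
      x (n + 2) * x (n + 4) * x (n + 6) * x (n + 8) * (x n / (A + B * stride2Prod x n)) := by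
    rw [← hrec]; rfl
  rw [hstep, mul_assoc, div_mul_cancel₀ _ (hden n), stride2Prod]
  ring

variable (hA : A ≠ 1) (hden : ∀ n, A + B * stride2Prod x n ≠ 0)
  (hrec : ∀ n, x (n + 10) = x n / (A + B * stride2Prod x n))
include hA hden hrec

lemma stride2Prod_mul_mobiusIterDenom (t m : ℕ) :
    stride2Prod x (2 * m + t) * mobiusIterDenom A B (stride2Prod x t) m = stride2Prod x t := by
  have hp (m : ℕ) : stride2Prod x (2 * (m + 1) + t) * (A + B * stride2Prod x (2 * m + t)) =
      stride2Prod x (2 * m + t) := by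
    rw [show 2 * (m + 1) + t = 2 * m + t + 2 by ring]
    exact stride2Prod_add_two hden hrec _
  simpa using mul_mobiusIterDenom_of_rec hA (p := fun m ↦ stride2Prod x (2 * m + t)) hp m

lemma add_ten_eq_mul_div_mobiusIterDenom (hx : ∀ n, x n ≠ 0) (t m : ℕ) :
    x (2 * m + t + 10) = x (2 * m + t) * mobiusIterDenom A B (stride2Prod x t) m /
      mobiusIterDenom A B (stride2Prod x t) (m + 1) := by
  set D := mobiusIterDenom A B (stride2Prod x t)
  have hP : stride2Prod x (2 * m + t) * D m = stride2Prod x t :=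
    stride2Prod_mul_mobiusIterDenom hA hden hrec t m
  have hD : D m ≠ 0 := right_ne_zero_of_mul (hP ▸ stride2Prod_ne_zero hx t)
  have hDsucc : D (m + 1) = (A + B * stride2Prod x (2 * m + t)) * D m := by
    rw [show D (m + 1) = A * D m + B * stride2Prod x t from mobiusIterDenom_succ hA _ m, ← hP]
    ring
  rw [hrec, hDsucc, mul_div_mul_right _ _ hD]

end Recurrence

theorem stmt5 (A B : ℝ) (hA : A ≠ 1) (x : ℕ → ℝ)
    (hx : ∀ n, x n ≠ 0)
    (hden : ∀ n, A + B * (x n * x (n+2) * x (n+4) * x (n+6) * x (n+8)) ≠ 0)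
    (hrec : ∀ n, x (n + 10) =
      x n / (A + B * (x n * x (n+2) * x (n+4) * x (n+6) * x (n+8)))) :
    ∀ k < 10, ∀ n : ℕ,
      x (10 * n + k) = x k * ∏ s ∈ Finset.range n,
        (A ^ (5 * s + k / 2) + B * (1 - A ^ (5 * s + k / 2)) / (1 - A) *
            (x (k % 2) * x (k % 2 + 2) * x (k % 2 + 4) * x (k % 2 + 6) * x (k % 2 + 8))) /
        (A ^ (5 * s + 1 + k / 2) + B * (1 - A ^ (5 * s + 1 + k / 2)) / (1 - A) *
            (x (k % 2) * x (k % 2 + 2) * x (k % 2 + 4) * x (k % 2 + 6) * x (k % 2 + 8))) := by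
  intro k _ n
  change x (10 * n + k) = x k * ∏ s ∈ range n,
    mobiusIterDenom A B (stride2Prod x (k % 2)) (5 * s + k / 2) /
      mobiusIterDenom A B (stride2Prod x (k % 2)) (5 * s + 1 + k / 2)
  induction n with
  | zero => simp
  | succ n ih =>
    have hidx : 10 * n + k = 2 * (5 * n + k / 2) + k % 2 := by omega
    rw [prod_range_succ, ← mul_assoc, ← ih, show 10 * (n + 1) + k = 10 * n + k + 10 by ring,
      hidx, add_ten_eq_mul_div_mobiusIterDenom hA hden hrec hx, mul_div_assoc,
      show 5 * n + 1 + k / 2 = 5 * n + k / 2 + 1 by ring]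
end

section
/- Let B ≠ 0 and let (x_n) satisfy x_{n+10} = x_n / (−1 + B·x_n·x_{n+2}·x_{n+4}·x_{n+6}·x_{n+8}) with all terms nonzero and denominators nonzero. Then the solution is periodic with period 20: x_{n+20} = x_n for all n. -/
theorem stmt6 (B : ℝ) (hB : B ≠ 0) (x : ℕ → ℝ)
    (hx : ∀ n, x n ≠ 0)
    (hden : ∀ n, -1 + B * (x n * x (n+2) * x (n+4) * x (n+6) * x (n+8)) ≠ 0)
    (hrec : ∀ n, x (n + 10) =
      x n / (-1 + B * (x n * x (n+2) * x (n+4) * x (n+6) * x (n+8)))) :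
    ∀ n, x (n + 20) = x n := by
  set Q : ℕ → ℝ := fun n => B * (x n * x (n+2) * x (n+4) * x (n+6) * x (n+8)) with hQdef
  have hdQ : ∀ n, -1 + Q n ≠ 0 := hden
  have hx10 : ∀ n, x (n + 10) * (-1 + Q n) = x n := by
    intro n
    rw [hrec n]
    exact div_mul_cancel₀ (x n) (hdQ n)
  have hQ2 : ∀ n, Q (n + 2) * (-1 + Q n) = Q n := by
    intro n
    have h := hx10 n
    have e1 : n + 2 + 2 = n + 4 := by ring
    have e2 : n + 2 + 4 = n + 6 := by ring
    have e3 : n + 2 + 6 = n + 8 := by ring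
    have e4 : n + 2 + 8 = n + 10 := by ring
    show B * (x (n+2) * x (n+2+2) * x (n+2+4) * x (n+2+6) * x (n+2+8)) * (-1 + Q n) = Q n
    rw [e1, e2, e3, e4]
    show _ = B * (x n * x (n+2) * x (n+4) * x (n+6) * x (n+8))
    linear_combination (B * (x (n+2) * x (n+4) * x (n+6) * x (n+8))) * h
  have hQ4 : ∀ n, Q (n + 4) = Q n := by
    intro n
    have h1 := hQ2 n
    have h2 := hQ2 (n + 2)
    rw [show n + 2 + 2 = n + 4 from by ring] at h2
    have hz : (Q (n + 4) - Q n) * (-1 + Q (n + 2)) = 0 := by linear_combination h2 - h1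
    rcases mul_eq_zero.mp hz with h | h
    · linarith
    · exact absurd h (hdQ (n + 2))
  intro n
  have hQ10 : Q (n + 10) = Q (n + 2) := by
    have a1 := hQ4 (n + 6)
    have a2 := hQ4 (n + 2)
    rw [show n + 6 + 4 = n + 10 from by ring] at a1
    rw [show n + 2 + 4 = n + 6 from by ring] at a2
    rw [a1, a2]
  have key : (-1 + Q n) * (-1 + Q (n + 2)) = 1 := by linear_combination hQ2 n
  have h20 : x (n + 20) = x (n + 10) / (-1 + Q (n + 10)) := by
    have h := hrec (n + 10)
    rw [show n + 10 + 10 = n + 20 from by ring] at h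
    exact h
  rw [h20, hQ10]
  rw [show x (n + 10) = x n / (-1 + Q n) from hrec n]
  rw [div_div, key, div_one]
end

section
/- Let A ≠ 1, B ≠ 0, and let (x_n) satisfy x_{n+10} = x_n/(A + B·x_n·x_{n+2}·x_{n+4}·x_{n+6}·x_{n+8}) with all terms and denominators nonzero. If x_i·x_{i+2}·x_{i+4}·x_{i+6}·x_{i+8} = (1−A)/B for i = 0 and i = 1, then x_{n+10} = x_n for all n, i.e., the solution is periodic with period 10. -/
/-!
When `x n * x (n+2) * ⋯ * x (n+8) = (1 - A) / B`, the denominator of the recurrence at `n` equals `1`,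
so `x (n+10) = x n`; the product at `n + 2` then has the same factors as the one at `n`.
Starting from `n = 0` and `n = 1`, induction in steps of two makes every product equal to `(1 - A) / B`.
-/

section

variable {K : Type*} [Field K] {A B : K} (x : ℕ → K)

def stepTwoProd (n : ℕ) : K :=
  x n * x (n + 2) * x (n + 4) * x (n + 6) * x (n + 8)

variable {x}

lemma add_period_of_stepTwoProd_eq (hB : B ≠ 0)
    (hrec : ∀ n, x (n + 10) = x n / (A + B * stepTwoProd x n)) {n : ℕ}
    (h : stepTwoProd x n = (1 - A) / B) : x (n + 10) = x n := by
  rw [hrec n, h, mul_div_cancel₀ _ hB, add_sub_cancel, div_one]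

lemma stepTwoProd_add_two {n : ℕ} (h : x (n + 10) = x n) :
    stepTwoProd x (n + 2) = stepTwoProd x n := by
  simp only [stepTwoProd, h]
  ring

lemma stepTwoProd_eq_of_initial (hB : B ≠ 0)
    (hrec : ∀ n, x (n + 10) = x n / (A + B * stepTwoProd x n))
    (h0 : stepTwoProd x 0 = (1 - A) / B) (h1 : stepTwoProd x 1 = (1 - A) / B) (n : ℕ) :
    stepTwoProd x n = (1 - A) / B := by
  induction n using Nat.twoStepInduction with
  | zero => exact h0
  | one => exact h1
  | more n ih _ => rw [stepTwoProd_add_two (add_period_of_stepTwoProd_eq hB hrec ih), ih]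

end

theorem stmt8_general (A B : ℝ) (hB : B ≠ 0) (x : ℕ → ℝ)
    (hrec : ∀ n, x (n + 10) =
      x n / (A + B * (x n * x (n+2) * x (n+4) * x (n+6) * x (n+8))))
    (h0 : x 0 * x 2 * x 4 * x 6 * x 8 = (1 - A) / B)
    (h1 : x 1 * x 3 * x 5 * x 7 * x 9 = (1 - A) / B) :
    ∀ n, x (n + 10) = x n :=
  fun _ => add_period_of_stepTwoProd_eq hB hrec (stepTwoProd_eq_of_initial hB hrec h0 h1 _)

theorem stmt8 (A B : ℝ) (hA : A ≠ 1) (hB : B ≠ 0) (x : ℕ → ℝ)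
    (hx : ∀ n, x n ≠ 0)
    (hden : ∀ n, A + B * (x n * x (n+2) * x (n+4) * x (n+6) * x (n+8)) ≠ 0)
    (hrec : ∀ n, x (n + 10) =
      x n / (A + B * (x n * x (n+2) * x (n+4) * x (n+6) * x (n+8))))
    (h0 : x 0 * x 2 * x 4 * x 6 * x 8 = (1 - A) / B)
    (h1 : x 1 * x 3 * x 5 * x 7 * x 9 = (1 - A) / B) :
    ∀ n, x (n + 10) = x n :=
  stmt8_general A B hB x hrec h0 h1
end

section
/- Let A ≠ 1, B ≠ 0, and let (x_n) satisfy x_{n+10} = x_n/(A + B·x_n·x_{n+2}·x_{n+4}·x_{n+6}·x_{n+8}) with nonzero terms and denominators. If x_0·x_1·x_2·x_3·x_4 = (1−A)/B and x_{i+5} = x_i for i = 0,...,4, then the solution is periodic with period 5: x_{n+5} = x_n for all n. -/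
/-!
The `5`-periodic sequence `y n = x (n % 5)` solves the recurrence: its terms at indices
`n, n+2, n+4, n+6, n+8` run through a full period, so their product is `x 0 ⋯ x 4 = (1 - A) / B`,
every denominator equals `1`, and the recurrence reduces to `y (n + 10) = y n`. Since `x` and `y`
agree on the first ten terms, they coincide.
-/

open Finset Function

theorem eq_of_recurrence_of_forall_lt_eq {α : Type*} {k : ℕ} (g : (Fin k → α) → α) {x y : ℕ → α}
    (hx : ∀ n, x (n + k) = g (fun i => x (n + i)))
    (hy : ∀ n, y (n + k) = g (fun i => y (n + i)))
    (hinit : ∀ i < k, x i = y i) : x = y := by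
  funext n
  induction n using Nat.strong_induction_on with
  | _ n ih =>
    rcases lt_or_ge n k with hn | hn
    · exact hinit n hn
    · obtain ⟨m, rfl⟩ := Nat.exists_eq_add_of_le' hn
      rw [hx, hy]
      congr 1
      funext i
      exact ih _ (by omega)

theorem Function.Periodic.prod_range_add {M : Type*} [CommMonoid M] {f : ℕ → M} {p : ℕ}
    (hf : Periodic f p) (n : ℕ) : ∏ i ∈ range p, f (n + i) = ∏ i ∈ range p, f i := by
  induction n with
  | zero => simp
  | succ n ih =>
    rw [← ih]
    cases p with
    | zero => simp
    | succ q =>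
      rw [prod_range_succ, prod_range_succ', add_zero, add_right_comm, add_assoc, hf n]
      congr 1
      exact prod_congr rfl fun i _ => by rw [add_right_comm, add_assoc]

theorem Function.Periodic.prod_alternate_five {M : Type*} [CommMonoid M] {f : ℕ → M}
    (hf : Periodic f 5) (n : ℕ) :
    f n * f (n + 2) * f (n + 4) * f (n + 6) * f (n + 8) = ∏ i ∈ range 5, f i := by
  rw [← hf.prod_range_add n, show n + 6 = n + 1 + 5 by ring, show n + 8 = n + 3 + 5 by ring,
    hf, hf]
  simp only [prod_range_succ, prod_range_zero, add_zero, one_mul]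
  ac_rfl

theorem Function.Periodic.add_ten_eq_div {K : Type*} [Field K] {A B : K} (hB : B ≠ 0)
    {y : ℕ → K} (hy : Periodic y 5) (hprod : ∏ i ∈ range 5, y i = (1 - A) / B) (n : ℕ) :
    y (n + 10) = y n / (A + B * (y n * y (n+2) * y (n+4) * y (n+6) * y (n+8))) := by
  have hden : A + B * ((1 - A) / B) = 1 := by field_simp; ring
  rw [hy.prod_alternate_five, hprod, hden, div_one, show n + 10 = n + 5 + 5 by ring, hy, hy]

theorem stmt9_general (A B : ℝ) (hB : B ≠ 0) (x : ℕ → ℝ)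
    (hrec : ∀ n, x (n + 10) =
      x n / (A + B * (x n * x (n+2) * x (n+4) * x (n+6) * x (n+8))))
    (hprod : x 0 * x 1 * x 2 * x 3 * x 4 = (1 - A) / B)
    (hper : ∀ i < 5, x (i + 5) = x i) :
    ∀ n, x (n + 5) = x n := by
  set y : ℕ → ℝ := fun n => x (n % 5)
  have hy : Periodic y 5 := (Nat.periodic_mod 5).comp x
  have hy_prod : ∏ i ∈ range 5, y i = (1 - A) / B := by
    simpa [y, prod_range_succ] using hprod
  have hinit (i : ℕ) (hi : i < 10) : x i = y i := by
    rcases lt_or_ge i 5 with h | h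
    · simp [y, Nat.mod_eq_of_lt h]
    · obtain ⟨j, rfl⟩ := Nat.exists_eq_add_of_le' h
      simp [y, hper j (by omega), Nat.mod_eq_of_lt (show j < 5 by omega)]
  have hxy : x = y := eq_of_recurrence_of_forall_lt_eq
    (fun v : Fin 10 → ℝ => v 0 / (A + B * (v 0 * v 2 * v 4 * v 6 * v 8))) hrec
    (hy.add_ten_eq_div hB hy_prod) hinit
  rw [hxy]
  exact hy

theorem stmt9 (A B : ℝ) (hA : A ≠ 1) (hB : B ≠ 0) (x : ℕ → ℝ)
    (hx : ∀ n, x n ≠ 0)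
    (hden : ∀ n, A + B * (x n * x (n+2) * x (n+4) * x (n+6) * x (n+8)) ≠ 0)
    (hrec : ∀ n, x (n + 10) =
      x n / (A + B * (x n * x (n+2) * x (n+4) * x (n+6) * x (n+8))))
    (hprod : x 0 * x 1 * x 2 * x 3 * x 4 = (1 - A) / B)
    (hper : ∀ i < 5, x (i + 5) = x i) :
    ∀ n, x (n + 5) = x n :=
  stmt9_general A B hB x hrec hprod hper
end
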